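/- arXiv:2102.00810 — 3 statements merged into one kernel-verified Lean document; each statement's English description precedes it below -/
import Mathlib

section
/- Let η ∈ (0,2) and x⁺ = x − η·(J*J + τL·I)⁻¹J*v. Then for every y ∈ E₁, ψ(y) = ψ(x⁺) + (L/2)·‖y − x⁺‖² + (1/(2τ))·‖J(y − x⁺)‖² + ((1 − η)/(2τ))·⟨y − x⁺, 2J*v⟩. (Lemma 13: exact expansion of the regularized local model around the scaled Gauss–Newton point.) -/
/-!
`ψ` is quadratic, so it equals its second-order Taylor expansion at any point `z`; the gradient
there is `τ⁻¹ (τL (z − x) + J*(v + J(z − x)))`. At `z = x − η d` the normal equation for `d`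
collapses this gradient to `τ⁻¹ (1 − η) J* v`, which is the last term of the expansion.
-/

open scoped RealInnerProductSpace

/-- `ψ(y) = τ/2 + (L/2)‖y − x‖² + (1/(2τ))‖v + J(y − x)‖²`. -/
noncomputable def psiQ {E₁ E₂ : Type*}
    [NormedAddCommGroup E₁] [InnerProductSpace ℝ E₁]
    [NormedAddCommGroup E₂] [InnerProductSpace ℝ E₂]
    (J : E₁ →L[ℝ] E₂) (v : E₂) (x : E₁) (τ L : ℝ) (y : E₁) : ℝ :=
  τ / 2 + L / 2 * ‖y - x‖ ^ 2 + 1 / (2 * τ) * ‖v + J (y - x)‖ ^ 2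

open scoped InnerProduct

section LocalModel

variable {E₁ E₂ : Type*}
  [NormedAddCommGroup E₁] [InnerProductSpace ℝ E₁]
  [NormedAddCommGroup E₂] [InnerProductSpace ℝ E₂] [CompleteSpace E₁] [CompleteSpace E₂]
  (J : E₁ →L[ℝ] E₂) (v : E₂) (x : E₁)

theorem psiQ_add {τ : ℝ} (hτ : τ ≠ 0) (L : ℝ) (z w : E₁) :
    psiQ J v x τ L (z + w)
      = psiQ J v x τ L z + L / 2 * ‖w‖ ^ 2 + 1 / (2 * τ) * ‖J w‖ ^ 2
        + 1 / τ * ⟪w, (τ * L) • (z - x) + (J†) (v + J (z - x))⟫ := by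
  have hsub : z + w - x = (z - x) + w := by abel
  have hres : v + J (z - x + w) = (v + J (z - x)) + J w := by
    rw [map_add, add_assoc]
  simp only [psiQ, hsub, hres, norm_add_sq_real, inner_add_right, real_inner_smul_right,
    ContinuousLinearMap.adjoint_inner_right, real_inner_comm w (z - x),
    real_inner_comm (J w)]
  field_simp
  ring

theorem smul_step_add_adjoint_residual_eq {μ : ℝ} {d : E₁}
    (hd : (J†) (J d) + μ • d = (J†) v) (η : ℝ) :
    μ • (x - η • d - x) + (J†) (v + J (x - η • d - x)) = (1 - η) • (J†) v := by
  rw [sub_sub_cancel_left, map_neg, map_smul, map_add, map_neg, map_smul, ← hd]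
  module

end LocalModel

theorem local_model_expansion_general
    {E₁ E₂ : Type*}
    [NormedAddCommGroup E₁] [InnerProductSpace ℝ E₁] [FiniteDimensional ℝ E₁]
    [NormedAddCommGroup E₂] [InnerProductSpace ℝ E₂] [FiniteDimensional ℝ E₂]
    (J : E₁ →L[ℝ] E₂) (v : E₂) (x : E₁)
    (τ L : ℝ) (hτ : 0 < τ)
    (η : ℝ)
    (d : E₁)
    (hd : (ContinuousLinearMap.adjoint J) (J d) + (τ * L) • d
        = (ContinuousLinearMap.adjoint J) v)
    (xp : E₁) (hxp : xp = x - η • d) :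
    ∀ y : E₁, psiQ J v x τ L y
      = psiQ J v x τ L xp + L / 2 * ‖y - xp‖ ^ 2 + 1 / (2 * τ) * ‖J (y - xp)‖ ^ 2
        + (1 - η) / (2 * τ) * ⟪y - xp, (2 : ℝ) • (ContinuousLinearMap.adjoint J) v⟫ := by
  intro y
  have hτ₀ : τ ≠ 0 := hτ.ne'
  conv_lhs => rw [← add_sub_cancel xp y]
  rw [psiQ_add J v x hτ₀, hxp, smul_step_add_adjoint_residual_eq J v x hd,
    real_inner_smul_right, real_inner_smul_right]
  field_simp

/-- **Lemma 13.** Exact expansion of the regularized local model around the scaled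
Gauss–Newton point `x⁺ = x − η (J*J + τL I)⁻¹ J* v` (encoded by the vector `d` solving
`(J*J + τL I) d = J* v`). -/
theorem local_model_expansion
    {E₁ E₂ : Type*}
    [NormedAddCommGroup E₁] [InnerProductSpace ℝ E₁] [FiniteDimensional ℝ E₁]
    [NormedAddCommGroup E₂] [InnerProductSpace ℝ E₂] [FiniteDimensional ℝ E₂]
    (J : E₁ →L[ℝ] E₂) (v : E₂) (x : E₁)
    (τ L : ℝ) (hτ : 0 < τ) (hL : 0 < L)
    (η : ℝ) (hη : η ∈ Set.Ioo (0 : ℝ) 2)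
    (d : E₁)
    (hd : (ContinuousLinearMap.adjoint J) (J d) + (τ * L) • d
        = (ContinuousLinearMap.adjoint J) v)
    (xp : E₁) (hxp : xp = x - η • d) :
    ∀ y : E₁, psiQ J v x τ L y
      = psiQ J v x τ L xp + L / 2 * ‖y - xp‖ ^ 2 + 1 / (2 * τ) * ‖J (y - xp)‖ ^ 2
        + (1 - η) / (2 * τ) * ⟪y - xp, (2 : ℝ) • (ContinuousLinearMap.adjoint J) v⟫ :=
  local_model_expansion_general J v x τ L hτ η d hd xp hxp
end

section
/- Let M > 0 with ‖J‖ ≤ M (operator norm), let v ∈ E₂ with g := ‖v‖ > 0, let L > 0 and η ∈ (0,1], and set d = η·(J*J + gL·I)⁻¹J*v. Then η·‖2J*v‖/(2(M² + gL)) ≤ ‖d‖ ≤ min{ √(2g/L), η·M/L }. (Lemma 14: two-sided bounds on the length of the scaled Gauss–Newton step with τ = ‖v‖.) -/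
/-!
Write `c = ‖v‖ L` and let `d₀` solve `J*J d₀ + c d₀ = J* v`. Pairing the equation with `d₀` gives
the energy identity `‖J d₀‖² + c ‖d₀‖² = ⟪J d₀, v⟫`. Bounding the right side by `‖J d₀‖ ‖v‖`
and absorbing `‖J d₀‖²` yields `4c ‖d₀‖² ≤ ‖v‖²`; dropping `‖J d₀‖²` instead yields
`c ‖d₀‖ ≤ ‖J‖ ‖v‖`. These are the two upper bounds. The lower bound is the triangle inequality
in `‖J* v‖ = ‖J*J d₀ + c d₀‖ ≤ (‖J‖² + c) ‖d₀‖`.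
-/

open ContinuousLinearMap

namespace ContinuousLinearMap

variable {E₁ E₂ : Type*}
  [NormedAddCommGroup E₁] [InnerProductSpace ℝ E₁] [CompleteSpace E₁]
  [NormedAddCommGroup E₂] [InnerProductSpace ℝ E₂] [CompleteSpace E₂]
  {J : E₁ →L[ℝ] E₂} {c : ℝ} {x : E₁} {y : E₂}

theorem norm_apply_sq_add_mul_norm_sq_eq_inner (h : adjoint J (J x) + c • x = adjoint J y) :
    ‖J x‖ ^ 2 + c * ‖x‖ ^ 2 = inner ℝ (J x) y := by
  have h' := congrArg (fun z : E₁ => inner ℝ z x) h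
  simp only [inner_add_left, real_inner_smul_left, adjoint_inner_left,
    real_inner_self_eq_norm_sq] at h'
  rw [h', real_inner_comm]

theorem four_mul_mul_norm_sq_le_of_adjoint_apply_add_smul_eq
    (h : adjoint J (J x) + c • x = adjoint J y) :
    4 * c * ‖x‖ ^ 2 ≤ ‖y‖ ^ 2 := by
  have hinner := real_inner_le_norm (J x) y
  rw [← norm_apply_sq_add_mul_norm_sq_eq_inner h] at hinner
  nlinarith [sq_nonneg (2 * ‖J x‖ - ‖y‖)]

theorem mul_norm_le_of_adjoint_apply_add_smul_eq (h : adjoint J (J x) + c • x = adjoint J y) :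
    c * ‖x‖ ≤ ‖J‖ * ‖y‖ := by
  rcases (norm_nonneg x).eq_or_lt with hx | hx
  · rw [← hx, mul_zero]
    positivity
  have hinner := real_inner_le_norm (J x) y
  rw [← norm_apply_sq_add_mul_norm_sq_eq_inner h] at hinner
  have hJx : ‖J x‖ * ‖y‖ ≤ ‖J‖ * ‖x‖ * ‖y‖ := by gcongr; exact J.le_opNorm x
  nlinarith [sq_nonneg ‖J x‖]

theorem norm_adjoint_apply_le_of_adjoint_apply_add_smul_eq
    (h : adjoint J (J x) + c • x = adjoint J y) (hc : 0 ≤ c) :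
    ‖adjoint J y‖ ≤ (‖J‖ ^ 2 + c) * ‖x‖ :=
  calc ‖adjoint J y‖ = ‖(adjoint J ∘L J) x + c • x‖ := by rw [← h]; rfl
    _ ≤ ‖adjoint J ∘L J‖ * ‖x‖ + c * ‖x‖ := by
        grw [norm_add_le, norm_smul, Real.norm_of_nonneg hc, le_opNorm]
    _ = (‖J‖ ^ 2 + c) * ‖x‖ := by rw [norm_adjoint_comp_self]; ring

end ContinuousLinearMap

theorem step_length_bounds_general
    {E₁ E₂ : Type*}
    [NormedAddCommGroup E₁] [InnerProductSpace ℝ E₁] [FiniteDimensional ℝ E₁]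
    [NormedAddCommGroup E₂] [InnerProductSpace ℝ E₂] [FiniteDimensional ℝ E₂]
    (J : E₁ →L[ℝ] E₂) (M : ℝ) (hJM : ‖J‖ ≤ M)
    (v : E₂) (hv : 0 < ‖v‖)
    (L : ℝ) (hL : 0 < L)
    (η : ℝ) (hη : η ∈ Set.Ioc (0 : ℝ) 1)
    (d₀ : E₁)
    (hd₀ : (ContinuousLinearMap.adjoint J) (J d₀) + (‖v‖ * L) • d₀
        = (ContinuousLinearMap.adjoint J) v)
    (d : E₁) (hd : d = η • d₀) :
    η * ‖(2 : ℝ) • (ContinuousLinearMap.adjoint J) v‖ / (2 * (M ^ 2 + ‖v‖ * L)) ≤ ‖d‖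
    ∧ ‖d‖ ≤ min (Real.sqrt (2 * ‖v‖ / L)) (η * M / L) := by
  obtain ⟨hη0, hη1⟩ := hη
  have hc : 0 < ‖v‖ * L := mul_pos hv hL
  have hnorm_d : ‖d‖ = η * ‖d₀‖ := by rw [hd, norm_smul, Real.norm_of_nonneg hη0.le]
  have hadj := norm_adjoint_apply_le_of_adjoint_apply_add_smul_eq hd₀ hc.le
  have hsq := four_mul_mul_norm_sq_le_of_adjoint_apply_add_smul_eq hd₀
  have hlin := mul_norm_le_of_adjoint_apply_add_smul_eq hd₀
  rw [hnorm_d, norm_smul, Real.norm_two]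
  refine ⟨?_, le_min ?_ ?_⟩
  · rw [mul_div_assoc, mul_div_mul_left _ _ two_ne_zero]
    gcongr
    rw [div_le_iff₀ (by positivity), mul_comm]
    exact hadj.trans (by gcongr)
  · calc η * ‖d₀‖ ≤ ‖d₀‖ := mul_le_of_le_one_left (norm_nonneg d₀) hη1
      _ ≤ Real.sqrt (2 * ‖v‖ / L) := by
        refine Real.le_sqrt_of_sq_le ?_
        rw [le_div_iff₀ hL]
        nlinarith
  · rw [mul_div_assoc]
    gcongr
    rw [le_div_iff₀ hL]
    nlinarith

/-- **Lemma 14.** Two-sided bounds on the length of the scaled Gauss–Newton step with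
`τ = ‖v‖`: with `d = η (J*J + ‖v‖L I)⁻¹ J* v` (encoded by the vector `d₀` solving
`(J*J + ‖v‖L I) d₀ = J* v`), one has
`η‖2J*v‖/(2(M² + ‖v‖L)) ≤ ‖d‖ ≤ min {√(2‖v‖/L), ηM/L}`. -/
theorem step_length_bounds
    {E₁ E₂ : Type*}
    [NormedAddCommGroup E₁] [InnerProductSpace ℝ E₁] [FiniteDimensional ℝ E₁]
    [NormedAddCommGroup E₂] [InnerProductSpace ℝ E₂] [FiniteDimensional ℝ E₂]
    (J : E₁ →L[ℝ] E₂) (M : ℝ) (hM : 0 < M) (hJM : ‖J‖ ≤ M)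
    (v : E₂) (hv : 0 < ‖v‖)
    (L : ℝ) (hL : 0 < L)
    (η : ℝ) (hη : η ∈ Set.Ioc (0 : ℝ) 1)
    (d₀ : E₁)
    (hd₀ : (ContinuousLinearMap.adjoint J) (J d₀) + (‖v‖ * L) • d₀
        = (ContinuousLinearMap.adjoint J) v)
    (d : E₁) (hd : d = η • d₀) :
    η * ‖(2 : ℝ) • (ContinuousLinearMap.adjoint J) v‖ / (2 * (M ^ 2 + ‖v‖ * L)) ≤ ‖d‖
    ∧ ‖d‖ ≤ min (Real.sqrt (2 * ‖v‖ / L)) (η * M / L) :=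
  step_length_bounds_general J M hJM v hv L hL η hη d₀ hd₀ d hd
end

section
/- Let l ≥ 2(M² + L_F·P), let x ∈ E₁ with ∇g₂(x) ≠ 0, set η = 2·⟨G'(x)*G(x), M_A⁻¹G'(x)*G(x)⟩ / ( l·⟨G'(x)*G(x), M_A⁻²G'(x)*G(x)⟩ ) and x⁺ = x − η·M_A⁻¹G'(x)*G(x). Then g₂(x⁺) ≤ g₂(x) − ⟨∇g₂(x), M_A⁻¹∇g₂(x)⟩² / ( 2l·⟨∇g₂(x), M_A⁻²∇g₂(x)⟩ ). (Lemma 17: guaranteed decrease of the squared residual for the optimally scaled preconditioned step.) -/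
open scoped RealInnerProductSpace
open ContinuousLinearMap

/-!
The gradient field `x ↦ ∇g₂(x) = 2 G'(x)*G(x)` is `2(M² + L_F P)`-Lipschitz, so the descent lemma
gives `g₂(x + d) ≤ g₂(x) + ⟪∇g₂(x), d⟫ + (l/2)‖d‖²`. Along `d = -η M_A⁻¹G'(x)*G(x)` the right-hand
side is a quadratic in `η`; since `M_A` is self-adjoint, `⟪G'(x)*G(x), M_A⁻²G'(x)*G(x)⟫` is
`‖M_A⁻¹G'(x)*G(x)‖²`, which makes the prescribed `η` the minimiser of that quadratic, and its
minimum value is the claimed decrease.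
-/

theorem descent_lemma {E : Type*} [NormedAddCommGroup E] [NormedSpace ℝ E]
    {f : E → ℝ} {f' : E → StrongDual ℝ E} (hf : ∀ x, HasFDerivAt f (f' x) x)
    {L : ℝ} (hL : ∀ x y, ‖f' x - f' y‖ ≤ L * ‖x - y‖) (y d : E) :
    f (y + d) ≤ f y + f' y d + L / 2 * ‖d‖ ^ 2 := by
  set ψ : ℝ → ℝ := fun t ↦ f (y + t • d) - t * f' y d - L / 2 * t ^ 2 * ‖d‖ ^ 2
  have hψ : ∀ t, HasDerivAt ψ ((f' (y + t • d) - f' y) d - L * t * ‖d‖ ^ 2) t := by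
    intro t
    have hline : HasDerivAt (fun t : ℝ ↦ y + t • d) d t := by
      simpa using ((hasDerivAt_id t).smul_const d).const_add y
    refine ((((hf _).comp_hasDerivAt t hline).sub (hasDerivAt_mul_const (f' y d))).sub
      (((hasDerivAt_pow 2 t).const_mul (L / 2)).mul_const (‖d‖ ^ 2))).congr_deriv ?_
    simp only [sub_apply, Nat.cast_ofNat]
    ring
  have hanti : AntitoneOn ψ (Set.Icc 0 1) := by
    refine antitoneOn_of_deriv_nonpos (convex_Icc 0 1)
      (fun t _ ↦ (hψ t).continuousAt.continuousWithinAt)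
      (fun t _ ↦ (hψ t).differentiableAt.differentiableWithinAt) fun t ht ↦ ?_
    rw [interior_Icc] at ht
    rw [(hψ t).deriv, sub_nonpos]
    calc (f' (y + t • d) - f' y) d ≤ ‖f' (y + t • d) - f' y‖ * ‖d‖ :=
          (Real.le_norm_self _).trans (le_opNorm _ _)
      _ ≤ L * ‖t • d‖ * ‖d‖ := by gcongr; simpa using hL (y + t • d) y
      _ = L * t * ‖d‖ ^ 2 := by rw [norm_smul, Real.norm_of_nonneg ht.1.le]; ring
  have := hanti (Set.left_mem_Icc.2 zero_le_one) (Set.right_mem_Icc.2 zero_le_one) zero_le_one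
  simp only [ψ, zero_smul, add_zero, one_smul, zero_mul, sub_zero, one_mul, one_pow,
    ne_eq, OfNat.ofNat_ne_zero, not_false_eq_true, zero_pow, mul_zero] at this
  linarith

theorem norm_adjoint_apply_sub_adjoint_apply_le {𝕜 E F : Type*} [RCLike 𝕜]
    [NormedAddCommGroup E] [InnerProductSpace 𝕜 E] [CompleteSpace E]
    [NormedAddCommGroup F] [InnerProductSpace 𝕜 F] [CompleteSpace F]
    (S T : E →L[𝕜] F) (u w : F) :
    ‖adjoint S u - adjoint T w‖ ≤ ‖S‖ * ‖u - w‖ + ‖S - T‖ * ‖w‖ := by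
  have hsplit : adjoint S u - adjoint T w = adjoint S (u - w) + adjoint (S - T) w := by
    simp only [map_sub, sub_apply]; abel
  rw [hsplit]
  refine (norm_add_le _ _).trans (add_le_add ?_ ?_) <;>
    exact (le_opNorm _ _).trans_eq (by rw [LinearIsometryEquiv.norm_map])

section ResidualSquare

variable {E₁ E₂ : Type*}
  [NormedAddCommGroup E₁] [InnerProductSpace ℝ E₁] [CompleteSpace E₁]
  [NormedAddCommGroup E₂] [InnerProductSpace ℝ E₂] [CompleteSpace E₂]

theorem HasFDerivAt.norm_sq_eq_innerSL_adjoint {G : E₁ → E₂} {G' : E₁ →L[ℝ] E₂} {x : E₁}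
    (h : HasFDerivAt G G' x) :
    HasFDerivAt (‖G ·‖ ^ 2) (innerSL ℝ ((2 : ℝ) • adjoint G' (G x))) x := by
  convert h.norm_sq using 1
  ext d
  simp [adjoint_inner_left]

variable {G : E₁ → E₂} {G' : E₁ → E₁ →L[ℝ] E₂} {LF M P : ℝ}

theorem norm_adjoint_apply_sub_le_of_lipschitz (hG : ∀ x, HasFDerivAt G (G' x) x)
    (hLip : ∀ x y, ‖G' y - G' x‖ ≤ LF * ‖y - x‖)
    (hGM : ∀ x, ‖G' x‖ ≤ M) (hGP : ∀ x, ‖G x‖ ≤ P) (y z : E₁) :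
    ‖adjoint (G' y) (G y) - adjoint (G' z) (G z)‖ ≤ (M ^ 2 + LF * P) * ‖y - z‖ := by
  have hGlip : ‖G y - G z‖ ≤ M * ‖y - z‖ :=
    convex_univ.norm_image_sub_le_of_norm_hasFDerivWithin_le
      (fun x _ ↦ (hG x).hasFDerivWithinAt) (fun x _ ↦ hGM x) trivial trivial
  calc ‖adjoint (G' y) (G y) - adjoint (G' z) (G z)‖
      ≤ ‖G' y‖ * ‖G y - G z‖ + ‖G' y - G' z‖ * ‖G z‖ :=
        norm_adjoint_apply_sub_adjoint_apply_le _ _ _ _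
    _ ≤ M * (M * ‖y - z‖) + LF * ‖y - z‖ * P := by
        gcongr
        · exact (norm_nonneg _).trans (hGM y)
        · exact hGM y
        · exact (norm_nonneg _).trans (hLip z y)
        · exact hLip z y
        · exact hGP z
    _ = (M ^ 2 + LF * P) * ‖y - z‖ := by ring

theorem descent_lemma_norm_sq (hG : ∀ x, HasFDerivAt G (G' x) x)
    (hLip : ∀ x y, ‖G' y - G' x‖ ≤ LF * ‖y - x‖)
    (hGM : ∀ x, ‖G' x‖ ≤ M) (hGP : ∀ x, ‖G x‖ ≤ P)
    {l : ℝ} (hl : 2 * (M ^ 2 + LF * P) ≤ l) (y d : E₁) :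
    ‖G (y + d)‖ ^ 2 ≤ ‖G y‖ ^ 2 + ⟪(2 : ℝ) • adjoint (G' y) (G y), d⟫ + l / 2 * ‖d‖ ^ 2 := by
  refine descent_lemma (fun x ↦ (hG x).norm_sq_eq_innerSL_adjoint) (fun x z ↦ ?_) y d
  rw [← map_sub, innerSL_apply_norm, ← smul_sub, norm_smul, Real.norm_two]
  calc 2 * ‖adjoint (G' x) (G x) - adjoint (G' z) (G z)‖
      ≤ 2 * ((M ^ 2 + LF * P) * ‖x - z‖) := by
        gcongr; exact norm_adjoint_apply_sub_le_of_lipschitz hG hLip hGM hGP x z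
    _ ≤ l * ‖x - z‖ := by rw [← mul_assoc]; gcongr

end ResidualSquare

theorem inner_eq_norm_sq_of_adjoint_comp_add_smul {E F : Type*}
    [NormedAddCommGroup E] [InnerProductSpace ℝ E] [CompleteSpace E]
    [NormedAddCommGroup F] [InnerProductSpace ℝ F] [CompleteSpace F]
    (A : E →L[ℝ] F) (c : ℝ) {v w₁ w₂ : E}
    (hw₁ : adjoint A (A w₁) + c • w₁ = v) (hw₂ : adjoint A (A w₂) + c • w₂ = w₁) :
    ⟪v, w₂⟫ = ‖w₁‖ ^ 2 := by
  rw [← real_inner_self_eq_norm_sq]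
  nth_rewrite 2 [← hw₂]
  rw [← hw₁, inner_add_left, inner_add_right, adjoint_inner_left, adjoint_inner_right,
    real_inner_smul_left, real_inner_smul_right]

/-- Also true when `l * b = 0`: then `x / 0 = 0` makes both the step and the decrease zero. -/
theorem quadratic_model_at_optimal_step (g a b l : ℝ) :
    g - 2 * (2 * a / (l * b)) * a + l / 2 * ((2 * a / (l * b)) ^ 2 * b)
      = g - (4 * a) ^ 2 / (2 * l * (4 * b)) := by
  rcases eq_or_ne l 0 with rfl | hl
  · simp
  rcases eq_or_ne b 0 with rfl | hb
  · simp
  field_simp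
  ring

/-- With `M_A = A*A + c I`, the vectors `w₁ = M_A⁻¹ G'(x)*G(x)` and `w₂ = M_A⁻² G'(x)*G(x)` are
encoded by `M_A w₁ = G'(x)*G(x)` and `M_A w₂ = w₁`, so that `M_A⁻¹∇g₂(x) = 2w₁` and
`M_A⁻²∇g₂(x) = 2w₂`. -/
theorem preconditioned_step_decrease_general
    {E₁ E₂ E₃ : Type*}
    [NormedAddCommGroup E₁] [InnerProductSpace ℝ E₁] [FiniteDimensional ℝ E₁]
    [NormedAddCommGroup E₂] [InnerProductSpace ℝ E₂] [FiniteDimensional ℝ E₂]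
    [NormedAddCommGroup E₃] [InnerProductSpace ℝ E₃] [FiniteDimensional ℝ E₃]
    (G : E₁ → E₂) (G' : E₁ → E₁ →L[ℝ] E₂)
    (hG : ∀ x, HasFDerivAt G (G' x) x)
    (LF M P : ℝ)
    (hLip : ∀ x y, ‖G' y - G' x‖ ≤ LF * ‖y - x‖)
    (hGM : ∀ x, ‖G' x‖ ≤ M) (hGP : ∀ x, ‖G x‖ ≤ P)
    (A : E₁ →L[ℝ] E₃) (c : ℝ)
    (l : ℝ) (hl : 2 * (M ^ 2 + LF * P) ≤ l)
    (x : E₁)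
    (w₁ : E₁)
    (hw₁ : (ContinuousLinearMap.adjoint A) (A w₁) + c • w₁
        = (ContinuousLinearMap.adjoint (G' x)) (G x))
    (w₂ : E₁)
    (hw₂ : (ContinuousLinearMap.adjoint A) (A w₂) + c • w₂ = w₁)
    (η : ℝ)
    (hη : η = 2 * ⟪(ContinuousLinearMap.adjoint (G' x)) (G x), w₁⟫
        / (l * ⟪(ContinuousLinearMap.adjoint (G' x)) (G x), w₂⟫))
    (xp : E₁) (hxp : xp = x - η • w₁) :
    ‖G xp‖ ^ 2 ≤ ‖G x‖ ^ 2
      - (⟪(2 : ℝ) • (ContinuousLinearMap.adjoint (G' x)) (G x), (2 : ℝ) • w₁⟫) ^ 2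
        / (2 * l * ⟪(2 : ℝ) • (ContinuousLinearMap.adjoint (G' x)) (G x), (2 : ℝ) • w₂⟫) := by
  set v := adjoint (G' x) (G x)
  have hw : ⟪v, w₂⟫ = ‖w₁‖ ^ 2 := inner_eq_norm_sq_of_adjoint_comp_add_smul A c hw₁ hw₂
  have hstep : x + -η • w₁ = xp := by rw [hxp]; module
  calc ‖G xp‖ ^ 2 ≤ ‖G x‖ ^ 2 + ⟪(2 : ℝ) • v, -η • w₁⟫ + l / 2 * ‖-η • w₁‖ ^ 2 :=
        hstep ▸ descent_lemma_norm_sq hG hLip hGM hGP hl x (-η • w₁)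
    _ = ‖G x‖ ^ 2 - 2 * η * ⟪v, w₁⟫ + l / 2 * (η ^ 2 * ⟪v, w₂⟫) := by
        rw [hw, real_inner_smul_left, real_inner_smul_right, norm_smul, mul_pow, norm_neg,
          Real.norm_eq_abs, sq_abs]
        ring
    _ = _ := by
        rw [hη, quadratic_model_at_optimal_step, real_inner_smul_left, real_inner_smul_right,
          real_inner_smul_left, real_inner_smul_right]
        ring

/-- **Lemma 17.** Guaranteed decrease of the squared residual `g₂ = ‖G(·)‖²` for the
optimally scaled preconditioned step, with preconditioner `M_A = A*A + c I`.
Here `w₁ = M_A⁻¹ G'(x)*G(x)` and `w₂ = M_A⁻² G'(x)*G(x)` are encoded by the equations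
`M_A w₁ = G'(x)*G(x)` and `M_A w₂ = w₁`, so that `M_A⁻¹∇g₂(x) = 2w₁` and
`M_A⁻²∇g₂(x) = 2w₂` where `∇g₂(x) = 2G'(x)*G(x)`. -/
theorem preconditioned_step_decrease
    {E₁ E₂ E₃ : Type*}
    [NormedAddCommGroup E₁] [InnerProductSpace ℝ E₁] [FiniteDimensional ℝ E₁]
    [NormedAddCommGroup E₂] [InnerProductSpace ℝ E₂] [FiniteDimensional ℝ E₂]
    [NormedAddCommGroup E₃] [InnerProductSpace ℝ E₃] [FiniteDimensional ℝ E₃]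
    (G : E₁ → E₂) (G' : E₁ → E₁ →L[ℝ] E₂)
    (hG : ∀ x, HasFDerivAt G (G' x) x)
    (LF M P : ℝ) (hLF : 0 < LF) (hM : 0 < M) (hP : 0 < P)
    (hLip : ∀ x y, ‖G' y - G' x‖ ≤ LF * ‖y - x‖)
    (hGM : ∀ x, ‖G' x‖ ≤ M) (hGP : ∀ x, ‖G x‖ ≤ P)
    (A : E₁ →L[ℝ] E₃) (c : ℝ) (hc : 0 < c)
    (l : ℝ) (hl : 2 * (M ^ 2 + LF * P) ≤ l)
    (x : E₁)
    (hgrad : (2 : ℝ) • (ContinuousLinearMap.adjoint (G' x)) (G x) ≠ 0)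
    (w₁ : E₁)
    (hw₁ : (ContinuousLinearMap.adjoint A) (A w₁) + c • w₁
        = (ContinuousLinearMap.adjoint (G' x)) (G x))
    (w₂ : E₁)
    (hw₂ : (ContinuousLinearMap.adjoint A) (A w₂) + c • w₂ = w₁)
    (η : ℝ)
    (hη : η = 2 * ⟪(ContinuousLinearMap.adjoint (G' x)) (G x), w₁⟫
        / (l * ⟪(ContinuousLinearMap.adjoint (G' x)) (G x), w₂⟫))
    (xp : E₁) (hxp : xp = x - η • w₁) :
    ‖G xp‖ ^ 2 ≤ ‖G x‖ ^ 2
      - (⟪(2 : ℝ) • (ContinuousLinearMap.adjoint (G' x)) (G x), (2 : ℝ) • w₁⟫) ^ 2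
        / (2 * l * ⟪(2 : ℝ) • (ContinuousLinearMap.adjoint (G' x)) (G x), (2 : ℝ) • w₂⟫) :=
  preconditioned_step_decrease_general G G' hG LF M P hLip hGM hGP A c l hl x w₁ hw₁ w₂ hw₂ η hη xp
    hxp
end
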